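/- arXiv:1211.2172 — 3 statements merged into one kernel-verified Lean document; each statement's English description precedes it below -/
import Mathlib

section
/- For every subgroup H of G_A one has (H^T)^T = H, where the outer dual is taken with respect to the matrix Aᵀ. -/
open scoped BigOperators
open Matrix

noncomputable section

abbrev QZ : Type := AddCircle (1 : ℚ)

def qz : ℚ →+ QZ := QuotientAddGroup.mk' _

def GA {n : ℕ} (A : Matrix (Fin n) (Fin n) ℤ) : AddSubgroup (Fin n → QZ) where
  carrier := {g | ∀ i, ∑ j, A i j • g j = 0}
  zero_mem' := by intro i; simp
  add_mem' := by
    intro a b ha hb i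
    simp only [Pi.add_apply, smul_add, Finset.sum_add_distrib, ha i, hb i, add_zero]
  neg_mem' := by
    intro a ha i
    simp only [Pi.neg_apply, smul_neg, Finset.sum_neg_distrib, ha i, neg_zero]

def SLA {n : ℕ} (A : Matrix (Fin n) (Fin n) ℤ) : AddSubgroup (Fin n → QZ) where
  carrier := {g | g ∈ GA A ∧ ∑ i, g i = 0}
  zero_mem' := ⟨(GA A).zero_mem, by simp⟩
  add_mem' := by
    intro a b ha hb
    exact ⟨(GA A).add_mem ha.1 hb.1, by simp [Pi.add_apply, Finset.sum_add_distrib, ha.2, hb.2]⟩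
  neg_mem' := by
    intro a ha
    exact ⟨(GA A).neg_mem ha.1, by simp [Pi.neg_apply, Finset.sum_neg_distrib, ha.2]⟩

def jA {n : ℕ} (A : Matrix (Fin n) (Fin n) ℤ) : Fin n → QZ :=
  fun i => qz (((A.map (Int.cast : ℤ → ℚ))⁻¹).mulVec 1 i)

/-- `v : ℚ^n` is a lift of `g : (ℚ/ℤ)^n`. -/
def IsLift {n : ℕ} (v : Fin n → ℚ) (g : Fin n → QZ) : Prop := ∀ i, qz (v i) = g i

lemma qz_eq_zero_iff (q : ℚ) : qz q = 0 ↔ ∃ m : ℤ, (m : ℚ) = q := by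
  constructor
  · intro h
    have : q ∈ AddSubgroup.zmultiples (1 : ℚ) := by
      rwa [qz, QuotientAddGroup.mk'_apply, QuotientAddGroup.eq_zero_iff] at h
    obtain ⟨k, hk⟩ := this
    exact ⟨k, by simpa using hk⟩
  · rintro ⟨m, rfl⟩
    rw [qz, QuotientAddGroup.mk'_apply, QuotientAddGroup.eq_zero_iff]
    exact ⟨m, by simp⟩

lemma exists_lift {n : ℕ} (g : Fin n → QZ) : ∃ v : Fin n → ℚ, IsLift v g := by
  choose v hv using fun i => QuotientAddGroup.mk'_surjective _ (g i)
  exact ⟨v, hv⟩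

lemma row_int {n : ℕ} {A : Matrix (Fin n) (Fin n) ℤ} {h : Fin n → QZ} (hh : h ∈ GA A)
    {vh : Fin n → ℚ} (hl : IsLift vh h) (i : Fin n) :
    ∃ m : ℤ, (m : ℚ) = ∑ j, (A i j : ℚ) * vh j := by
  have h0 : qz (∑ j, (A i j : ℚ) * vh j) = 0 := by
    have := hh i
    calc qz (∑ j, (A i j : ℚ) * vh j) = ∑ j, A i j • qz (vh j) := by
          rw [map_sum]
          refine Finset.sum_congr rfl fun j _ => ?_
          rw [← map_zsmul qz, zsmul_eq_mul]
      _ = ∑ j, A i j • h j := by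
          refine Finset.sum_congr rfl fun j _ => by rw [hl j]
      _ = 0 := hh i
  exact (qz_eq_zero_iff _).1 h0

/-- The Berglund–Hübsch dual `H^T` of a subgroup `H ≤ G_A`: all `g ∈ G_{Aᵀ}` such that
for every `h ∈ H` and all lifts `ĝ, ĥ ∈ ℚ^n` of `g, h`, the number `∑ᵢⱼ ĝᵢ Aᵢⱼ ĥⱼ` is an
integer. -/
def dual {n : ℕ} (A : Matrix (Fin n) (Fin n) ℤ) (H : AddSubgroup (Fin n → QZ))
    (hH : H ≤ GA A) : AddSubgroup (Fin n → QZ) where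
  carrier := {g | g ∈ GA Aᵀ ∧ ∀ h ∈ H, ∀ vg vh : Fin n → ℚ, IsLift vg g → IsLift vh h →
    ∃ m : ℤ, (m : ℚ) = ∑ i, ∑ j, vg i * (A i j : ℚ) * vh j}
  zero_mem' := by
    refine ⟨(GA Aᵀ).zero_mem, ?_⟩
    intro h hh vg vh lg lh
    have hg : ∀ i, ∃ m : ℤ, (m : ℚ) = vg i := by
      intro i
      exact (qz_eq_zero_iff _).1 ((lg i).trans rfl)
    choose mg hmg using hg
    choose c hc using fun i => row_int (hH hh) lh i
    refine ⟨∑ i, mg i * c i, ?_⟩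
    push_cast
    calc (∑ i, (mg i : ℚ) * (c i : ℚ))
        = ∑ i, vg i * ∑ j, (A i j : ℚ) * vh j := by
          refine Finset.sum_congr rfl fun i _ => by rw [hmg i, hc i]
      _ = ∑ i, ∑ j, vg i * (A i j : ℚ) * vh j := by
          refine Finset.sum_congr rfl fun i _ => ?_
          rw [Finset.mul_sum]
          exact Finset.sum_congr rfl fun j _ => (mul_assoc _ _ _).symm
  add_mem' := by
    intro a b ha hb
    refine ⟨(GA Aᵀ).add_mem ha.1 hb.1, ?_⟩
    intro h hh vg vh lg lh
    obtain ⟨va, hva⟩ := exists_lift a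
    have hvb : IsLift (vg - va) b := by
      intro i
      have : qz (vg i - va i) = qz (vg i) - qz (va i) := map_sub qz _ _
      rw [Pi.sub_apply, this, lg i, hva i, Pi.add_apply, add_sub_cancel_left]
    obtain ⟨m₁, e₁⟩ := ha.2 h hh va vh hva lh
    obtain ⟨m₂, e₂⟩ := hb.2 h hh (vg - va) vh hvb lh
    refine ⟨m₁ + m₂, ?_⟩
    push_cast
    rw [e₁, e₂, ← Finset.sum_add_distrib]
    refine Finset.sum_congr rfl fun i _ => ?_
    rw [← Finset.sum_add_distrib]
    refine Finset.sum_congr rfl fun j _ => ?_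
    simp only [Pi.sub_apply]
    ring
  neg_mem' := by
    intro a ha
    refine ⟨(GA Aᵀ).neg_mem ha.1, ?_⟩
    intro h hh vg vh lg lh
    have hvg : IsLift (-vg) a := by
      intro i
      have : qz (-(vg i)) = - qz (vg i) := map_neg qz _
      rw [Pi.neg_apply, this, lg i, Pi.neg_apply, neg_neg]
    obtain ⟨m, e⟩ := ha.2 h hh (-vg) vh hvg lh
    refine ⟨-m, ?_⟩
    push_cast
    rw [e, ← Finset.sum_neg_distrib]
    refine Finset.sum_congr rfl fun i _ => ?_
    rw [← Finset.sum_neg_distrib]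
    refine Finset.sum_congr rfl fun j _ => ?_
    simp only [Pi.neg_apply]
    ring

lemma dual_le {n : ℕ} (A : Matrix (Fin n) (Fin n) ℤ) (H : AddSubgroup (Fin n → QZ))
    (hH : H ≤ GA A) : dual A H hH ≤ GA Aᵀ := fun _ hg => hg.1

lemma SLA_le {n : ℕ} (A : Matrix (Fin n) (Fin n) ℤ) : SLA A ≤ GA A := fun _ hg => hg.1



lemma qz_int (m : ℤ) : qz (m : ℚ) = 0 := (qz_eq_zero_iff _).2 ⟨m, rfl⟩

lemma qz_surj (x : QZ) : ∃ q : ℚ, qz q = x := QuotientAddGroup.mk'_surjective _ x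

lemma lift_sub_int {q r : ℚ} (h : qz q = qz r) : ∃ d : ℤ, (d : ℚ) = q - r :=
  (qz_eq_zero_iff _).1 (by rw [map_sub, h, sub_self])

lemma sum_rw {n : ℕ} (A : Matrix (Fin n) (Fin n) ℤ) (v w : Fin n → ℚ) :
    ∑ i, ∑ j, v i * (A i j : ℚ) * w j = ∑ i, v i * ∑ j, (A i j : ℚ) * w j := by
  refine Finset.sum_congr rfl fun i _ => ?_
  rw [Finset.mul_sum]
  exact Finset.sum_congr rfl fun j _ => mul_assoc _ _ _

lemma isUnit_det_map {n : ℕ} (A : Matrix (Fin n) (Fin n) ℤ) (hA : A.det ≠ 0) :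
    IsUnit (A.map (Int.cast : ℤ → ℚ)).det := by
  have : (A.map (Int.cast : ℤ → ℚ)).det = ((A.det : ℚ)) := by
    rw [show A.map (Int.cast : ℤ → ℚ) = (Int.castRingHom ℚ).mapMatrix A from rfl,
      ← RingHom.map_det]
    rfl
  rw [isUnit_iff_ne_zero, this]
  exact_mod_cast hA

lemma col_sum_eq {n : ℕ} (A : Matrix (Fin n) (Fin n) ℤ) (hA : A.det ≠ 0) {vh : Fin n → ℚ}
    (m : Fin n → ℤ) (hm : ∀ i, (m i : ℚ) = ∑ j, (A i j : ℚ) * vh j) :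
    (∑ i, m i • (fun l => qz ((A.map (Int.cast : ℤ → ℚ))⁻¹ l i))) = fun l => qz (vh l) := by
  funext l
  set B := (A.map (Int.cast : ℤ → ℚ))⁻¹ with hB
  have h1 : (∑ i, m i • (fun l => qz (B l i))) l = ∑ i, m i • qz (B l i) := by
    simp [Finset.sum_apply]
  rw [h1]
  have h2 : ∑ i, m i • qz (B l i) = qz (∑ i, B l i * (m i : ℚ)) := by
    rw [map_sum]
    refine Finset.sum_congr rfl fun i _ => ?_
    rw [← map_zsmul qz, zsmul_eq_mul, mul_comm]
  rw [h2]
  congr 1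
  have hmv : (fun i => (m i : ℚ)) = (A.map (Int.cast : ℤ → ℚ)).mulVec vh := by
    funext i
    rw [hm i]
    simp [Matrix.mulVec, dotProduct, Matrix.map_apply]
  have h3 : ∑ i, B l i * (m i : ℚ) = B.mulVec (fun i => (m i : ℚ)) l := rfl
  rw [h3, hmv, Matrix.mulVec_mulVec, hB, Matrix.nonsing_inv_mul _ (isUnit_det_map A hA),
    Matrix.one_mulVec]

lemma pairing_main {n : ℕ} (A : Matrix (Fin n) (Fin n) ℤ) (hA : A.det ≠ 0)
    (φ : (Fin n → QZ) →+ QZ) (c : Fin n → ℚ)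
    (hc : ∀ k, qz (c k) = φ (fun i => qz ((A.map (Int.cast : ℤ → ℚ))⁻¹ i k)))
    {h : Fin n → QZ} (hh : h ∈ GA A) {vh : Fin n → ℚ} (hl : IsLift vh h)
    {vg : Fin n → ℚ} (hg : ∀ i, qz (vg i) = qz (c i)) :
    qz (∑ i, ∑ j, vg i * (A i j : ℚ) * vh j) = φ h := by
  choose m hm using fun i => row_int hh hl i
  choose D hD using fun i => lift_sub_int (hg i)
  have key : ∑ i, ∑ j, vg i * (A i j : ℚ) * vh j
      = (∑ i, (m i : ℚ) * c i) + ∑ i, (D i : ℚ) * (m i : ℚ) := by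
    rw [sum_rw, ← Finset.sum_add_distrib]
    refine Finset.sum_congr rfl fun i _ => ?_
    rw [← hm i]
    have hv : vg i = c i + (D i : ℚ) := by rw [hD i]; ring
    rw [hv]; ring
  rw [key, map_add]
  have h2 : qz (∑ i, (D i : ℚ) * (m i : ℚ)) = 0 := by
    have e : (((∑ i, D i * m i : ℤ)) : ℚ) = ∑ i, (D i : ℚ) * (m i : ℚ) := by push_cast; rfl
    rw [← e, qz_int]
  rw [h2, add_zero]
  have e1 : qz (∑ i, (m i : ℚ) * c i)
      = ∑ i, m i • φ (fun l => qz ((A.map (Int.cast : ℤ → ℚ))⁻¹ l i)) := by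
    rw [map_sum]
    refine Finset.sum_congr rfl fun i _ => ?_
    rw [← zsmul_eq_mul, map_zsmul qz, hc i]
  rw [e1]
  have e2 : ∑ i, m i • φ (fun l => qz ((A.map (Int.cast : ℤ → ℚ))⁻¹ l i))
      = φ (∑ i, m i • (fun l => qz ((A.map (Int.cast : ℤ → ℚ))⁻¹ l i))) := by
    rw [map_sum]
    exact Finset.sum_congr rfl fun i _ => (map_zsmul φ _ _).symm
  rw [e2, col_sum_eq A hA m hm]
  congr 1
  funext l
  exact hl l

lemma g_mem_GAT {n : ℕ} (A : Matrix (Fin n) (Fin n) ℤ) (hA : A.det ≠ 0)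
    (φ : (Fin n → QZ) →+ QZ) (c : Fin n → ℚ)
    (hc : ∀ k, qz (c k) = φ (fun i => qz ((A.map (Int.cast : ℤ → ℚ))⁻¹ i k))) :
    (fun j => qz (c j)) ∈ GA Aᵀ := by
  intro i
  set B := (A.map (Int.cast : ℤ → ℚ))⁻¹ with hB
  have e1 : ∑ j, Aᵀ i j • qz (c j) = φ (∑ j, A j i • (fun l => qz (B l j))) := by
    rw [map_sum]
    refine Finset.sum_congr rfl fun j _ => ?_
    rw [Matrix.transpose_apply, hc j, ← map_zsmul φ]
  rw [e1]
  have e2 : (∑ j, A j i • (fun l => qz (B l j))) = (0 : Fin n → QZ) := by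
    funext l
    have s1 : (∑ j, A j i • (fun l => qz (B l j))) l = ∑ j, A j i • qz (B l j) := by
      simp [Finset.sum_apply]
    have s2 : ∑ j, A j i • qz (B l j) = qz (∑ j, B l j * (A j i : ℚ)) := by
      rw [map_sum]
      refine Finset.sum_congr rfl fun j _ => ?_
      rw [← map_zsmul qz, zsmul_eq_mul, mul_comm]
    have s3 : ∑ j, B l j * (A j i : ℚ) = (B * A.map (Int.cast : ℤ → ℚ)) l i := by
      rw [Matrix.mul_apply]
      exact Finset.sum_congr rfl fun j _ => by rw [Matrix.map_apply]
    rw [s1, s2, s3, hB, Matrix.nonsing_inv_mul _ (isUnit_det_map A hA)]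
    by_cases hli : l = i
    · subst hli
      rw [Matrix.one_apply_eq]
      simpa using qz_int 1
    · rw [Matrix.one_apply_ne hli]
      simp [map_zero]
  rw [e2, map_zero]

lemma swap_sum {n : ℕ} (A : Matrix (Fin n) (Fin n) ℤ) (v w : Fin n → ℚ) :
    ∑ i, ∑ j, v i * ((Aᵀ) i j : ℚ) * w j = ∑ i, ∑ j, w i * (A i j : ℚ) * v j := by
  rw [Finset.sum_comm]
  refine Finset.sum_congr rfl fun i _ => Finset.sum_congr rfl fun j _ => ?_
  rw [Matrix.transpose_apply]
  ring

/-- for every subgroup `H ≤ G_A` one has `(H^T)^T = H`, the outer dual being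
taken with respect to `Aᵀ`. -/
theorem dual_dual_eq_self {n : ℕ} (hn : 1 ≤ n) (A : Matrix (Fin n) (Fin n) ℤ)
    (hA : A.det ≠ 0) (H : AddSubgroup (Fin n → QZ)) (hH : H ≤ GA A) :
    dual Aᵀ (dual A H hH) (dual_le A H hH) = H := by
  apply le_antisymm
  · intro h₀ hh₀
    by_contra hmem
    have h₀GA : h₀ ∈ GA A := by
      have := hh₀.1
      rwa [Matrix.transpose_transpose] at this
    have hq : (QuotientAddGroup.mk' H h₀) ≠ 0 := by
      rw [QuotientAddGroup.mk'_apply, Ne, QuotientAddGroup.eq_zero_iff]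
      exact hmem
    obtain ⟨χ, hχ⟩ := CharacterModule.exists_character_apply_ne_zero_of_ne_zero hq
    set φ : (Fin n → QZ) →+ QZ :=
      (show ((Fin n → QZ) ⧸ H) →+ QZ from χ).comp (QuotientAddGroup.mk' H) with hφ
    have hφ0 : ∀ h ∈ H, φ h = 0 := by
      intro h hh
      have hz : QuotientAddGroup.mk' H h = 0 := by
        rw [QuotientAddGroup.mk'_apply, QuotientAddGroup.eq_zero_iff]
        exact hh
      rw [hφ, AddMonoidHom.comp_apply, hz, map_zero]
    have hφh₀ : φ h₀ ≠ 0 := hχ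
    choose c hc using fun k => qz_surj (φ (fun i => qz ((A.map (Int.cast : ℤ → ℚ))⁻¹ i k)))
    have hc' : ∀ k, qz (c k) = φ (fun i => qz ((A.map (Int.cast : ℤ → ℚ))⁻¹ i k)) := hc
    have hgmem : (fun j => qz (c j)) ∈ dual A H hH := by
      refine ⟨g_mem_GAT A hA φ c hc', ?_⟩
      intro h hh vg vh lg lh
      have := pairing_main A hA φ c hc' (hH hh) lh (vg := vg) lg
      rw [hφ0 h hh] at this
      exact (qz_eq_zero_iff _).1 this
    obtain ⟨vh₀, lifth₀⟩ := exists_lift h₀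
    obtain ⟨M, hM⟩ := hh₀.2 (fun j => qz (c j)) hgmem vh₀ c lifth₀ (fun i => rfl)
    have hpair := pairing_main A hA φ c hc' h₀GA lifth₀ (vg := c) (fun i => rfl)
    have : φ h₀ = 0 := by
      rw [← hpair, ← swap_sum A vh₀ c, ← hM, qz_int]
    exact hφh₀ this
  · intro h hmemH
    refine ⟨?_, ?_⟩
    · show h ∈ GA Aᵀᵀ
      rw [Matrix.transpose_transpose]
      exact hH hmemH
    · intro g hg vh vg lh lg
      obtain ⟨M, hM⟩ := hg.2 h hmemH vg vh lg lh
      exact ⟨M, by rw [hM, swap_sum A vh vg]⟩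


end
end

section
/- The Calabi–Yau condition is preserved under Berglund–Hübsch transposition: if the sum of all entries of A^{-1} equals 1 and H is a subgroup with J_A ⊆ H ⊆ SL_A, then the sum of all entries of (Aᵀ)^{-1} equals 1 and J_{Aᵀ} ⊆ H^T ⊆ SL_{Aᵀ}. -/
open scoped BigOperators
open Matrix

noncomputable section

/-!
Write `⟨v, w⟩ = v ⬝ᵥ (A *ᵥ w)` for the pairing of lifts. The vector `w = (Aᵀ)⁻¹ 𝟙` lifting
`j_{Aᵀ}` satisfies `w ᵥ* A = 𝟙`, so `⟨w, ĥ⟩ = ∑ ĥⱼ`, an integer for `h ∈ SL_A`; any other lift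
of `j_{Aᵀ}` differs from `w` by an integer vector, which pairs integrally with `ĥ` because `A ĥ`
is integral. Symmetrically `u = A⁻¹ 𝟙` lifts `j_A` and `⟨ĝ, u⟩ = ∑ ĝᵢ`, which is an integer
when `g ∈ H^T` and `j_A ∈ H`. The sum of the entries of `(Aᵀ)⁻¹ = (A⁻¹)ᵀ` is that of `A⁻¹`.
-/

lemma qz_intCast (m : ℤ) : qz m = 0 := (qz_eq_zero_iff _).2 ⟨m, rfl⟩

lemma qz_sum_of_isLift {n : ℕ} {v : Fin n → ℚ} {g : Fin n → QZ} (hv : IsLift v g) :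
    qz (∑ i, v i) = ∑ i, g i := by
  rw [map_sum]
  exact Finset.sum_congr rfl fun i _ => hv i

lemma qz_intCast_dotProduct_of_isLift {n : ℕ} (k : Fin n → ℤ) {v : Fin n → ℚ}
    {g : Fin n → QZ} (hv : IsLift v g) :
    qz ((fun i => (k i : ℚ)) ⬝ᵥ v) = ∑ i, k i • g i := by
  simp only [dotProduct, map_sum, ← zsmul_eq_mul, map_zsmul]
  exact Finset.sum_congr rfl fun i _ => by rw [hv i]

lemma qz_dotProduct_eq_zero {n : ℕ} {x y : Fin n → ℚ} (hx : ∀ i, qz (x i) = 0)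
    (hy : ∀ i, qz (y i) = 0) : qz (x ⬝ᵥ y) = 0 := by
  choose k hk using fun i => (qz_eq_zero_iff (x i)).1 (hx i)
  obtain rfl : x = fun i => (k i : ℚ) := funext fun i => (hk i).symm
  simp [qz_intCast_dotProduct_of_isLift k (v := y) (fun i => rfl), hy]

lemma qz_mulVec_of_isLift {n : ℕ} (A : Matrix (Fin n) (Fin n) ℤ) {v : Fin n → ℚ}
    {g : Fin n → QZ} (hv : IsLift v g) (i : Fin n) :
    qz ((A.map (Int.cast : ℤ → ℚ) *ᵥ v) i) = ∑ j, A i j • g j :=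
  qz_intCast_dotProduct_of_isLift (A i) hv

lemma mem_GA_iff_of_isLift {n : ℕ} (A : Matrix (Fin n) (Fin n) ℤ) {v : Fin n → ℚ}
    {g : Fin n → QZ} (hv : IsLift v g) :
    g ∈ GA A ↔ ∀ i, qz ((A.map (Int.cast : ℤ → ℚ) *ᵥ v) i) = 0 := by
  simp only [qz_mulVec_of_isLift A hv]
  rfl

lemma isLift_jA {n : ℕ} (A : Matrix (Fin n) (Fin n) ℤ) :
    IsLift ((A.map (Int.cast : ℤ → ℚ))⁻¹ *ᵥ 1) (jA A) := fun _ => rfl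

lemma mulVec_inv_mulVec_one {n : ℕ} {A : Matrix (Fin n) (Fin n) ℤ} (hA : A.det ≠ 0) :
    A.map (Int.cast : ℤ → ℚ) *ᵥ ((A.map (Int.cast : ℤ → ℚ))⁻¹ *ᵥ 1) = 1 := by
  have hunit : IsUnit (A.map (Int.cast : ℤ → ℚ)).det := by
    rw [← Int.cast_det, isUnit_iff_ne_zero]
    exact_mod_cast hA
  rw [mulVec_mulVec, mul_nonsing_inv _ hunit, one_mulVec]

lemma jA_mem_GA {n : ℕ} {A : Matrix (Fin n) (Fin n) ℤ} (hA : A.det ≠ 0) : jA A ∈ GA A := by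
  rw [mem_GA_iff_of_isLift A (isLift_jA A), mulVec_inv_mulVec_one hA]
  exact fun _ => by exact_mod_cast qz_intCast 1

lemma Matrix.sum_sum_mul_intCast_mul_eq_dotProduct_mulVec {R m o : Type*} [CommRing R]
    [Fintype m] [Fintype o] (A : Matrix m o ℤ) (v : m → R) (w : o → R) :
    ∑ i, ∑ j, v i * (A i j : R) * w j = v ⬝ᵥ (A.map (Int.cast : ℤ → R) *ᵥ w) := by
  simp only [dotProduct, mulVec, map_apply, Finset.mul_sum, mul_assoc]

lemma Matrix.sum_sum_inv_transpose {R m : Type*} [CommRing R] [Fintype m] [DecidableEq m]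
    (M : Matrix m m R) : ∑ i, ∑ j, Mᵀ⁻¹ i j = ∑ i, ∑ j, M⁻¹ i j := by
  simp only [← transpose_nonsing_inv, transpose_apply]
  exact Finset.sum_comm

lemma jA_transpose_mem_dual {n : ℕ} {A : Matrix (Fin n) (Fin n) ℤ} (hA : A.det ≠ 0)
    {H : AddSubgroup (Fin n → QZ)} (hH : H ≤ SLA A) :
    jA Aᵀ ∈ dual A H (hH.trans (SLA_le A)) := by
  refine ⟨jA_mem_GA (by rwa [det_transpose]), fun h hh vg vh hvg hvh => ?_⟩
  set w := (Aᵀ.map (Int.cast : ℤ → ℚ))⁻¹ *ᵥ 1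
  have hw : w ᵥ* A.map (Int.cast : ℤ → ℚ) = 1 := by
    rw [← mulVec_transpose, ← transpose_map]
    exact mulVec_inv_mulVec_one (by rwa [det_transpose])
  have hvgw : ∀ i, qz ((vg - w) i) = 0 := fun i => by
    rw [Pi.sub_apply, map_sub, hvg i, isLift_jA Aᵀ i, sub_self]
  have hAvh : ∀ i, qz ((A.map (Int.cast : ℤ → ℚ) *ᵥ vh) i) = 0 :=
    (mem_GA_iff_of_isLift A hvh).1 (hH hh).1
  apply (qz_eq_zero_iff _).1
  rw [sum_sum_mul_intCast_mul_eq_dotProduct_mulVec, ← sub_add_cancel vg w, add_dotProduct,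
    map_add, dotProduct_mulVec w, hw, one_dotProduct, qz_sum_of_isLift hvh, (hH hh).2, add_zero]
  exact qz_dotProduct_eq_zero hvgw hAvh

lemma dual_le_SLA_transpose {n : ℕ} {A : Matrix (Fin n) (Fin n) ℤ} (hA : A.det ≠ 0)
    {H : AddSubgroup (Fin n → QZ)} (hHG : H ≤ GA A) (hJ : jA A ∈ H) :
    dual A H hHG ≤ SLA Aᵀ := by
  intro g hg
  obtain ⟨vg, hvg⟩ := exists_lift g
  obtain ⟨m, hm⟩ := hg.2 _ hJ vg _ hvg (isLift_jA A)
  rw [sum_sum_mul_intCast_mul_eq_dotProduct_mulVec, mulVec_inv_mulVec_one hA,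
    dotProduct_one] at hm
  exact ⟨hg.1, by rw [← qz_sum_of_isLift hvg, ← hm, qz_intCast]⟩

theorem CalabiYau_transpose_general {n : ℕ} (A : Matrix (Fin n) (Fin n) ℤ)
    (hA : A.det ≠ 0)
    (hsum : ∑ i, ∑ j, ((A.map (Int.cast : ℤ → ℚ))⁻¹) i j = 1)
    (H : AddSubgroup (Fin n → QZ))
    (hJH : AddSubgroup.zmultiples (jA A) ≤ H) (hHSL : H ≤ SLA A) :
    (∑ i, ∑ j, ((Aᵀ.map (Int.cast : ℤ → ℚ))⁻¹) i j = 1) ∧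
    AddSubgroup.zmultiples (jA Aᵀ) ≤ dual A H (hHSL.trans (SLA_le A)) ∧
    dual A H (hHSL.trans (SLA_le A)) ≤ SLA Aᵀ :=
  ⟨by rw [transpose_map, sum_sum_inv_transpose, hsum],
    AddSubgroup.zmultiples_le.2 (jA_transpose_mem_dual hA hHSL),
    dual_le_SLA_transpose hA _ (hJH (AddSubgroup.mem_zmultiples _))⟩

/-- the Calabi–Yau condition is preserved under Berglund–Hübsch transposition:
if the sum of all entries of `A⁻¹` is `1` and `J_A ⊆ H ⊆ SL_A`, then the sum of all entries
of `(Aᵀ)⁻¹` is `1` and `J_{Aᵀ} ⊆ H^T ⊆ SL_{Aᵀ}`. -/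
theorem CalabiYau_transpose {n : ℕ} (hn : 1 ≤ n) (A : Matrix (Fin n) (Fin n) ℤ)
    (hA : A.det ≠ 0)
    (hsum : ∑ i, ∑ j, ((A.map (Int.cast : ℤ → ℚ))⁻¹) i j = 1)
    (H : AddSubgroup (Fin n → QZ))
    (hJH : AddSubgroup.zmultiples (jA A) ≤ H) (hHSL : H ≤ SLA A) :
    (∑ i, ∑ j, ((Aᵀ.map (Int.cast : ℤ → ℚ))⁻¹) i j = 1) ∧
    AddSubgroup.zmultiples (jA Aᵀ) ≤ dual A H (hHSL.trans (SLA_le A)) ∧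
    dual A H (hHSL.trans (SLA_le A)) ≤ SLA Aᵀ :=
  CalabiYau_transpose_general A hA hsum H hJH hHSL

end
end

section
/- Let A = diag(3,3,6,6), j_A = (1/3, 1/3, 1/6, 1/6), and let G₁ be the subgroup of (ℚ/ℤ)⁴ generated by j_A and g₁ = (2/3, 1/3, 0, 0), and G₂ the subgroup generated by j_A and g₂ = (1/3, 1/3, 1/3, 0). Then (noting Aᵀ = A) the dual groups satisfy G₁^T = G₂ and G₂^T = G₁. -/
open scoped BigOperators
open Matrix

noncomputable section

lemma zsmul_qz (k : ℤ) (q : ℚ) : k • qz q = qz (k * q) := by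
  rw [← map_zsmul qz, zsmul_eq_mul]

lemma qz_one' : qz 1 = 0 := (qz_eq_zero_iff _).2 ⟨1, by norm_num⟩
lemma qz_two' : qz (3 * (2/3)) = 0 := (qz_eq_zero_iff _).2 ⟨2, by norm_num⟩
lemma qz_c1' : qz (6 * (1/3)) = 0 := (qz_eq_zero_iff _).2 ⟨2, by norm_num⟩
lemma qz_c2' : qz (3 * (1/3)) = 0 := (qz_eq_zero_iff _).2 ⟨1, by norm_num⟩
lemma qz_c3' : qz (6 * (1/6)) = 0 := (qz_eq_zero_iff _).2 ⟨1, by norm_num⟩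
lemma qz_c4' : qz 2 = 0 := (qz_eq_zero_iff _).2 ⟨2, by norm_num⟩
lemma qz_c5' : qz (6 * (2/3)) = 0 := (qz_eq_zero_iff _).2 ⟨4, by norm_num⟩
lemma qz_c6' : qz (6 * 3⁻¹) = 0 := (qz_eq_zero_iff _).2 ⟨2, by norm_num⟩

/-- The exponent matrix of `W = x³ + y³ + z⁶ + w⁶` (note `Aᵀ = A`). -/
def A12 : Matrix (Fin 4) (Fin 4) ℤ := Matrix.diagonal ![3, 3, 6, 6]

/-- The exponential grading element `j_A = (1/3, 1/3, 1/6, 1/6)`. -/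
def jvec12 : Fin 4 → QZ := ![qz (1/3), qz (1/3), qz (1/6), qz (1/6)]

/-- `G₁ = ⟨j_A, (2/3,1/3,0,0)⟩`. -/
def G1 : AddSubgroup (Fin 4 → QZ) :=
  AddSubgroup.closure {jvec12, ![qz (2/3), qz (1/3), 0, 0]}

lemma G1_le : G1 ≤ GA A12 := by
  rw [G1, AddSubgroup.closure_le]
  rintro x hx
  simp only [Set.mem_insert_iff, Set.mem_singleton_iff] at hx
  rcases hx with rfl | rfl <;>
  · show ∀ i, ∑ j, A12 i j • _ = 0
    intro i
    fin_cases i <;>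
      simp [A12, jvec12, Matrix.diagonal, Fin.sum_univ_four, zsmul_qz] <;>
      (first
        | exact qz_one'
        | exact qz_two'
        | exact qz_c1'
        | exact qz_c2'
        | exact qz_c3'
        | exact qz_c4'
        | exact qz_c5'
        | exact qz_c6')

/-- `G₂ = ⟨j_A, (1/3,1/3,1/3,0)⟩`. -/
def G2 : AddSubgroup (Fin 4 → QZ) :=
  AddSubgroup.closure {jvec12, ![qz (1/3), qz (1/3), qz (1/3), 0]}

lemma G2_le : G2 ≤ GA A12 := by
  rw [G2, AddSubgroup.closure_le]
  rintro x hx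
  simp only [Set.mem_insert_iff, Set.mem_singleton_iff] at hx
  rcases hx with rfl | rfl <;>
  · show ∀ i, ∑ j, A12 i j • _ = 0
    intro i
    fin_cases i <;>
      simp [A12, jvec12, Matrix.diagonal, Fin.sum_univ_four, zsmul_qz] <;>
      (first
        | exact qz_one'
        | exact qz_two'
        | exact qz_c1'
        | exact qz_c2'
        | exact qz_c3'
        | exact qz_c4'
        | exact qz_c5'
        | exact qz_c6')

/-!
For `g ∈ G_{Aᵀ}` and `h ∈ G_A` the class of `∑ ĝᵢ Aᵢⱼ ĥⱼ` in `ℚ/ℤ` does not depend on the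
lifts, since changing `ĝ` by an integer vector changes the sum by an integer combination of the
integers `(A ĥ)ᵢ`, and symmetrically for `ĥ`. It is biadditive, so membership in the dual of a
subgroup generated by a set `S` only has to be tested against `S`. For `A = diag(3,3,6,6)`, the
generators of `G₁` and `G₂` pair integrally with each other, which gives `G₂ ≤ G₁^T` and
`G₁ ≤ G₂^T`. Conversely, if a lift `v` of `g ∈ G_A` pairs integrally with `j_A` and `g₁`, then
`v₀ + v₁ + v₂ + v₃` and `2v₀ + v₁` are integers, and `g = 6v₃ • j_A + (3v₀ - 6v₃) • g₂`;
similarly `g = 6v₂ • j_A + (3v₁ - 6v₂) • g₁` for `g ∈ G₂^T`.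
-/

section Pairing

variable {n : ℕ} {A : Matrix (Fin n) (Fin n) ℤ}

def pairing (A : Matrix (Fin n) (Fin n) ℤ) (v w : Fin n → ℚ) : ℚ :=
  v ⬝ᵥ (A.map (Int.cast : ℤ → ℚ) *ᵥ w)

lemma sum_sum_mul_eq_pairing (v w : Fin n → ℚ) :
    ∑ i, ∑ j, v i * (A i j : ℚ) * w j = pairing A v w := by
  simp only [pairing, dotProduct, mulVec, Finset.mul_sum, map_apply, mul_assoc]

lemma pairing_add_right (v w w' : Fin n → ℚ) :
    pairing A v (w + w') = pairing A v w + pairing A v w' := by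
  rw [pairing, mulVec_add, dotProduct_add, pairing, pairing]

lemma pairing_neg_right (v w : Fin n → ℚ) : pairing A v (-w) = -pairing A v w := by
  rw [pairing, mulVec_neg, dotProduct_neg, pairing]

lemma pairing_diagonal (d : Fin n → ℤ) (v w : Fin n → ℚ) :
    pairing (diagonal d) v w = ∑ i, (d i : ℚ) * (v i * w i) := by
  simp only [pairing, diagonal_map Int.cast_zero, mulVec_diagonal, dotProduct]
  exact Finset.sum_congr rfl fun i _ => by ring

lemma IsLift.add {v w : Fin n → ℚ} {g h : Fin n → QZ} (hv : IsLift v g) (hw : IsLift w h) :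
    IsLift (v + w) (g + h) := fun i => by rw [Pi.add_apply, map_add, hv i, hw i, Pi.add_apply]

lemma IsLift.neg {v : Fin n → ℚ} {g : Fin n → QZ} (hv : IsLift v g) : IsLift (-v) (-g) :=
  fun i => by rw [Pi.neg_apply, map_neg, hv i, Pi.neg_apply]

lemma IsLift.sub {v w : Fin n → ℚ} {g h : Fin n → QZ} (hv : IsLift v g) (hw : IsLift w h) :
    IsLift (v - w) (g - h) := fun i => by rw [Pi.sub_apply, map_sub, hv i, hw i, Pi.sub_apply]

lemma IsLift.zsmul {v : Fin n → ℚ} {g : Fin n → QZ} (hv : IsLift v g) (k : ℤ) :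
    IsLift (k • v) (k • g) := fun i => by rw [Pi.smul_apply, map_zsmul, hv i, Pi.smul_apply]

lemma mem_closure_pair_of_isLift {g a b : Fin n → QZ} {v va vb : Fin n → ℚ} (hv : IsLift v g)
    (ha : IsLift va a) (hb : IsLift vb b) (k l : ℤ)
    (hint : ∀ i, ∃ m : ℤ, (m : ℚ) = v i - (k * va i + l * vb i)) :
    g ∈ AddSubgroup.closure {a, b} := by
  refine AddSubgroup.mem_closure_pair.2 ⟨k, l, funext fun i => ?_⟩
  rw [← hv i, Pi.add_apply, Pi.smul_apply, Pi.smul_apply, ← ha i, ← hb i, ← map_zsmul, ← map_zsmul,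
    ← map_add, eq_comm, ← sub_eq_zero, ← map_sub, qz_eq_zero_iff]
  simpa only [zsmul_eq_mul] using hint i

lemma qz_dotProduct_eq_zero_s12 {v w : Fin n → ℚ} (hv : IsLift v 0) (hw : IsLift w 0) :
    qz (v ⬝ᵥ w) = 0 := by
  choose a ha using fun i => (qz_eq_zero_iff _).1 (hv i)
  choose b hb using fun i => (qz_eq_zero_iff _).1 (hw i)
  exact (qz_eq_zero_iff _).2 ⟨∑ i, a i * b i, by simp [dotProduct, ha, hb]⟩

lemma isLift_mulVec_zero {h : Fin n → QZ} {v : Fin n → ℚ} (hh : h ∈ GA A) (hv : IsLift v h) :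
    IsLift (A.map (Int.cast : ℤ → ℚ) *ᵥ v) 0 := fun i => by
  obtain ⟨m, hm⟩ := row_int hh hv i
  exact (qz_eq_zero_iff _).2 ⟨m, by simpa [mulVec, dotProduct] using hm⟩

lemma exists_intCast_eq_mul_of_mem_GA_diagonal {d : Fin n → ℤ} {g : Fin n → QZ}
    {v : Fin n → ℚ} (hg : g ∈ GA (diagonal d)) (hv : IsLift v g) (i : Fin n) :
    ∃ m : ℤ, (m : ℚ) = d i * v i := by
  simpa [diagonal_apply] using row_int hg hv i

lemma qz_pairing_eq {g h : Fin n → QZ} (hg : g ∈ GA Aᵀ) (hh : h ∈ GA A)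
    {v v' w w' : Fin n → ℚ} (hv : IsLift v g) (hv' : IsLift v' g)
    (hw : IsLift w h) (hw' : IsLift w' h) :
    qz (pairing A v w) = qz (pairing A v' w') := by
  set M := A.map (Int.cast : ℤ → ℚ)
  have hsplit : pairing A v w - pairing A v' w' =
      (v - v') ⬝ᵥ (M *ᵥ w) + (Mᵀ *ᵥ v') ⬝ᵥ (w - w') := by
    simp only [pairing, mulVec_transpose, ← dotProduct_mulVec, sub_dotProduct, dotProduct_sub]
    ring
  have hMt : Mᵀ = Aᵀ.map (Int.cast : ℤ → ℚ) := transpose_map.symm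
  rw [← sub_eq_zero, ← map_sub, hsplit, map_add,
    qz_dotProduct_eq_zero_s12 (by simpa using hv.sub hv') (isLift_mulVec_zero hh hw),
    qz_dotProduct_eq_zero_s12 (hMt ▸ isLift_mulVec_zero hg hv') (by simpa using hw.sub hw'), add_zero]

lemma closure_le_dual {S T : Set (Fin n → QZ)} (hS : AddSubgroup.closure S ≤ GA A)
    (hT : T ⊆ GA Aᵀ)
    (hST : ∀ t ∈ T, ∃ v, IsLift v t ∧ ∀ s ∈ S, ∃ w, IsLift w s ∧ qz (pairing A v w) = 0) :
    AddSubgroup.closure T ≤ dual A (AddSubgroup.closure S) hS := by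
  rw [AddSubgroup.closure_le]
  intro t ht
  obtain ⟨v, hv, hvS⟩ := hST t ht
  have hint : ∀ h ∈ AddSubgroup.closure S, ∃ w, IsLift w h ∧ qz (pairing A v w) = 0 := by
    intro h hh
    induction hh using AddSubgroup.closure_induction with
    | mem s hs => exact hvS s hs
    | zero => exact ⟨0, fun i => map_zero qz, by simp [pairing]⟩
    | add a b _ _ ha hb =>
      obtain ⟨wa, hwa, ha⟩ := ha
      obtain ⟨wb, hwb, hb⟩ := hb
      refine ⟨wa + wb, hwa.add hwb, ?_⟩
      rw [pairing_add_right, map_add, ha, hb, add_zero]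
    | neg a _ ha =>
      obtain ⟨wa, hwa, ha⟩ := ha
      refine ⟨-wa, hwa.neg, ?_⟩
      rw [pairing_neg_right, map_neg, ha, neg_zero]
  refine ⟨hT ht, fun h hh v' w' hv' hw' => ?_⟩
  obtain ⟨w, hw, hvw⟩ := hint h hh
  rw [← qz_eq_zero_iff, sum_sum_mul_eq_pairing, qz_pairing_eq (hT ht) (hS hh) hv' hv hw' hw, hvw]

end Pairing

lemma pairing_A12 (v w : Fin 4 → ℚ) :
    pairing A12 v w = 3 * (v 0 * w 0) + 3 * (v 1 * w 1) + 6 * (v 2 * w 2) + 6 * (v 3 * w 3) := by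
  rw [A12, pairing_diagonal, Fin.sum_univ_four]
  rfl

lemma A12_transpose : A12ᵀ = A12 := diagonal_transpose _

lemma isLift_jvec12 : IsLift ![1/3, 1/3, 1/6, 1/6] jvec12 := by
  intro i; fin_cases i <;> rfl

lemma isLift_g1 : IsLift ![2/3, 1/3, 0, 0] ![qz (2/3), qz (1/3), 0, 0] := by
  intro i; fin_cases i <;> simp

lemma isLift_g2 : IsLift ![1/3, 1/3, 1/3, 0] ![qz (1/3), qz (1/3), qz (1/3), 0] := by
  intro i; fin_cases i <;> simp

lemma G2_le_dual_G1 : G2 ≤ dual A12 G1 G1_le := by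
  refine closure_le_dual G1_le (A12_transpose ▸ AddSubgroup.subset_closure.trans G2_le) ?_
  simp only [Set.mem_insert_iff, Set.mem_singleton_iff, forall_eq_or_imp, forall_eq]
  refine ⟨⟨_, isLift_jvec12, ⟨_, isLift_jvec12, ?_⟩, ⟨_, isLift_g1, ?_⟩⟩,
    ⟨_, isLift_g2, ⟨_, isLift_jvec12, ?_⟩, ⟨_, isLift_g1, ?_⟩⟩⟩ <;>
  exact (qz_eq_zero_iff _).2 ⟨1, by rw [pairing_A12]; simp only [cons_val]; norm_num⟩

lemma G1_le_dual_G2 : G1 ≤ dual A12 G2 G2_le := by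
  refine closure_le_dual G2_le (A12_transpose ▸ AddSubgroup.subset_closure.trans G1_le) ?_
  simp only [Set.mem_insert_iff, Set.mem_singleton_iff, forall_eq_or_imp, forall_eq]
  refine ⟨⟨_, isLift_jvec12, ⟨_, isLift_jvec12, ?_⟩, ⟨_, isLift_g2, ?_⟩⟩,
    ⟨_, isLift_g1, ⟨_, isLift_jvec12, ?_⟩, ⟨_, isLift_g2, ?_⟩⟩⟩ <;>
  exact (qz_eq_zero_iff _).2 ⟨1, by rw [pairing_A12]; simp only [cons_val]; norm_num⟩

lemma dual_G1_le_G2 : dual A12 G1 G1_le ≤ G2 := by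
  rintro g ⟨hg, hgG1⟩
  obtain ⟨v, hv⟩ := exists_lift g
  rw [A12_transpose] at hg
  obtain ⟨a, ha⟩ := exists_intCast_eq_mul_of_mem_GA_diagonal hg hv 0
  obtain ⟨b, hb⟩ := exists_intCast_eq_mul_of_mem_GA_diagonal hg hv 3
  obtain ⟨k, hk⟩ := hgG1 _ (AddSubgroup.subset_closure (Set.mem_insert _ _)) v _ hv isLift_jvec12
  obtain ⟨l, hl⟩ := hgG1 _ (AddSubgroup.subset_closure (Set.mem_insert_of_mem _ rfl)) v _ hv
    isLift_g1
  rw [sum_sum_mul_eq_pairing, pairing_A12] at hk hl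
  simp only [cons_val] at ha hb hk hl
  push_cast at ha hb
  refine mem_closure_pair_of_isLift hv isLift_jvec12 isLift_g2 b (a - b) fun i => ?_
  fin_cases i
  · exact ⟨0, by push_cast; linarith⟩
  · exact ⟨l - a, by push_cast; linarith⟩
  · exact ⟨k - l, by push_cast; linarith⟩
  · exact ⟨0, by push_cast; linarith⟩

lemma dual_G2_le_G1 : dual A12 G2 G2_le ≤ G1 := by
  rintro g ⟨hg, hgG2⟩
  obtain ⟨v, hv⟩ := exists_lift g
  rw [A12_transpose] at hg
  obtain ⟨a, ha⟩ := exists_intCast_eq_mul_of_mem_GA_diagonal hg hv 1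
  obtain ⟨b, hb⟩ := exists_intCast_eq_mul_of_mem_GA_diagonal hg hv 2
  obtain ⟨k, hk⟩ := hgG2 _ (AddSubgroup.subset_closure (Set.mem_insert _ _)) v _ hv isLift_jvec12
  obtain ⟨l, hl⟩ := hgG2 _ (AddSubgroup.subset_closure (Set.mem_insert_of_mem _ rfl)) v _ hv
    isLift_g2
  rw [sum_sum_mul_eq_pairing, pairing_A12] at hk hl
  simp only [cons_val] at ha hb hk hl
  push_cast at ha hb
  refine mem_closure_pair_of_isLift hv isLift_jvec12 isLift_g1 b (a - b) fun i => ?_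
  fin_cases i
  · exact ⟨l - a, by push_cast; linarith⟩
  · exact ⟨0, by push_cast; linarith⟩
  · exact ⟨0, by push_cast; linarith⟩
  · exact ⟨k - l, by push_cast; linarith⟩

/-- for `A = diag(3,3,6,6)` (so `Aᵀ = A`), the subgroups
`G₁ = ⟨j_A, (2/3,1/3,0,0)⟩` and `G₂ = ⟨j_A, (1/3,1/3,1/3,0)⟩` satisfy `G₁^T = G₂` and
`G₂^T = G₁`. -/
theorem stmt12 : dual A12 G1 G1_le = G2 ∧ dual A12 G2 G2_le = G1 :=
  ⟨le_antisymm dual_G1_le_G2 G2_le_dual_G1, le_antisymm dual_G2_le_G1 G1_le_dual_G2⟩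

end
end
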